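/- Let n and m be unit vectors in a real inner product space E, and set P = id − n ⊗ n (the orthogonal projection onto the orthogonal complement of n) and Q_h = m ⊗ m. Then the operator norm satisfies ‖P ∘ Q_h‖ ≤ ‖n − m‖ + (1/2) ‖n − m‖². (Third projector bound of Lemma 4.4: with ‖n^e − n_h‖_{L∞} ≲ h^{k_g} this gives ‖P_Γ Q_{Γ_h}‖_{L∞(Γ_h)} ≲ h^{k_g}.) -/

import Mathlib

/-!
`P = id − n ⊗ n` is the orthogonal projection onto `n^⊥`, and `P (Q_h x) = ⟪m, x⟫ • P m`.
Since `P n = 0`, `P m = P (m − n)`, so `‖P Q_h‖ ≤ ‖P (m − n)‖ ≤ ‖m − n‖`: the bound holds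
even without the quadratic term.
-/

open scoped RealInnerProductSpace

/-- The rank-one operator `a ⊗ b : E → E`, `x ↦ ⟪b, x⟫ • a`. -/
noncomputable def tensor {E : Type*} [NormedAddCommGroup E] [InnerProductSpace ℝ E]
    (a b : E) : E →L[ℝ] E :=
  (innerSL ℝ b).smulRight a

section

variable {E : Type*} [NormedAddCommGroup E] [InnerProductSpace ℝ E]

@[simp]
lemma tensor_apply (a b x : E) : tensor a b x = ⟪b, x⟫ • a := rfl

lemma norm_tensor_le (a b : E) : ‖tensor a b‖ ≤ ‖a‖ * ‖b‖ :=
  ContinuousLinearMap.opNorm_le_bound _ (by positivity) fun x => by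
    rw [tensor_apply, norm_smul, Real.norm_eq_abs, mul_comm ‖a‖, mul_right_comm]
    gcongr
    exact abs_real_inner_le_norm b x

lemma id_sub_tensor_comp_tensor (n a b : E) :
    (ContinuousLinearMap.id ℝ E - tensor n n) ∘L tensor a b = tensor (a - ⟪n, a⟫ • n) b := by
  ext x
  simp only [ContinuousLinearMap.comp_apply, sub_apply, ContinuousLinearMap.id_apply,
    tensor_apply, inner_smul_right, smul_sub, smul_smul, mul_comm]

lemma norm_sub_inner_smul_le {n : E} (hn : ‖n‖ = 1) (v : E) : ‖v - ⟪n, v⟫ • n‖ ≤ ‖v‖ := by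
  have hsq : ‖v - ⟪n, v⟫ • n‖ ^ 2 = ‖v‖ ^ 2 - ⟪n, v⟫ ^ 2 := by
    rw [norm_sub_sq_real, norm_smul, mul_pow, Real.norm_eq_abs, sq_abs, hn, inner_smul_right,
      real_inner_comm]
    ring
  refine (pow_le_pow_iff_left₀ (norm_nonneg _) (norm_nonneg _) two_ne_zero).mp ?_
  rw [hsq]
  linarith [sq_nonneg ⟪n, v⟫]

lemma norm_id_sub_tensor_comp_tensor_le {n m : E} (hn : ‖n‖ = 1) (hm : ‖m‖ = 1) :
    ‖(ContinuousLinearMap.id ℝ E - tensor n n) ∘L tensor m m‖ ≤ ‖n - m‖ := by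
  have hPm : m - ⟪n, m⟫ • n = (m - n) - ⟪n, m - n⟫ • n := by
    rw [inner_sub_right, real_inner_self_eq_norm_sq, hn, sub_smul]
    simp
  calc ‖(ContinuousLinearMap.id ℝ E - tensor n n) ∘L tensor m m‖
      = ‖tensor ((m - n) - ⟪n, m - n⟫ • n) m‖ := by rw [id_sub_tensor_comp_tensor, hPm]
    _ ≤ ‖(m - n) - ⟪n, m - n⟫ • n‖ * ‖m‖ := norm_tensor_le _ _
    _ ≤ ‖n - m‖ := by rw [hm, mul_one, norm_sub_rev n]; exact norm_sub_inner_smul_le hn _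

end

/-- for unit vectors `n`, `m`, with `P = id − n ⊗ n` and
`Q_h = m ⊗ m`, we have `‖P ∘ Q_h‖ ≤ ‖n − m‖ + (1/2)‖n − m‖²`. -/
theorem stmt_4 {E : Type*} [NormedAddCommGroup E] [InnerProductSpace ℝ E]
    (n m : E) (hn : ‖n‖ = 1) (hm : ‖m‖ = 1) :
    let P : E →L[ℝ] E := ContinuousLinearMap.id ℝ E - tensor n n
    let Qh : E →L[ℝ] E := tensor m m
    ‖P ∘L Qh‖ ≤ ‖n - m‖ + (1 / 2) * ‖n - m‖ ^ 2 :=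
  le_add_of_le_of_nonneg (norm_id_sub_tensor_comp_tensor_le hn hm) (by positivity)
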